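/- Let d ≥ 2, let P be a d×d symmetric positive definite matrix with eigenvalues σ_1 ≥ ⋯ ≥ σ_d > 0 and orthonormal eigenvectors u_1,…,u_d, let g be a nonzero vector in span{u_1, u_2}, let α ∈ (−1/d, 0], set g̃ = g/√(gᵀPg), and define P' = (d²(1−α²)/(d²−1))(P − (2(1+dα)/((d+1)(1+α))) P g̃ g̃ᵀ P). Then: (i) for every 3 ≤ i ≤ d, u_i is an eigenvector of P' with eigenvalue (d²(1−α²)/(d²−1)) σ_i; (ii) letting σ'_1 ≥ σ'_2 be the other two eigenvalues of P', one has (σ'_1σ'_2)/(σ_1σ_2) = d⁴(1−α)³(1+α)/((d+1)³(d−1)) < 1; (iii) (d²(1−α)²/(d+1)²)σ_1 ≤ σ'_1 ≤ (d²(1−α²)/(d²−1))σ_1 and (d²(1−α)²/(d+1)²)σ_2 ≤ σ'_2 ≤ (d²(1−α²)/(d²−1))σ_2. -/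

import Mathlib

/-!
Write the update as `P' = c (P - β P g̃ g̃ᵀ P)` with `c = d²(1-α²)/(d²-1)` and
`β = 2(1+dα)/((d+1)(1+α))`. Since `g̃` lies in the `P`-invariant plane `span {u₀, u₁}`, every `uᵢ`
orthogonal to that plane stays an eigenvector, with eigenvalue scaled by `c`. In the orthonormal
basis `u₀, u₁` of the plane the update is the `2 × 2` matrix `M = c (D - β D w wᵀ D)`, where
`D = diag(σ₀, σ₁)` and `wᵀ D w = 1`. The matrix determinant lemma gives
`det M = c² (1 - β) σ₀ σ₁`, and Cauchy–Schwarz gives `c (1 - β) D ≤ M ≤ c D` as quadratic forms;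
together with the fact that the diagonal of a symmetric `2 × 2` matrix lies between its
eigenvalues, this traps each eigenvalue of `M` between `c (1 - β)` and `c` times the matching `σᵢ`.
-/

open Matrix

section Update

variable {n m R : Type*} [Fintype n] [CommRing R]

def shallowCutUpdate (c β : R) (P : Matrix n n R) (w : n → R) : Matrix n n R :=
  c • (P - β • (P * vecMulVec w w * P))

theorem shallowCutUpdate_mulVec (c β : R) (P : Matrix n n R) (w v : n → R) :
    shallowCutUpdate c β P w *ᵥ v = c • (P *ᵥ v - (β * (w ⬝ᵥ P *ᵥ v)) • P *ᵥ w) := by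
  rw [shallowCutUpdate, smul_mulVec, sub_mulVec, smul_mulVec, ← mulVec_mulVec, ← mulVec_mulVec,
    vecMulVec_mulVec, op_smul_eq_smul, mulVec_smul, smul_smul]

theorem shallowCutUpdate_mulVec_of_orthogonal {c β s : R} {P : Matrix n n R} {w v : n → R}
    (hv : P *ᵥ v = s • v) (hwv : w ⬝ᵥ v = 0) :
    shallowCutUpdate c β P w *ᵥ v = (c * s) • v := by
  rw [shallowCutUpdate_mulVec, hv, dotProduct_smul, hwv, smul_zero, mul_zero, zero_smul,
    sub_zero, smul_smul]

theorem dotProduct_shallowCutUpdate_mulVec (c β : R) {P : Matrix n n R} (hP : P.IsSymm)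
    (w v : n → R) :
    v ⬝ᵥ shallowCutUpdate c β P w *ᵥ v = c * (v ⬝ᵥ P *ᵥ v - β * (w ⬝ᵥ P *ᵥ v) ^ 2) := by
  have hsymm : v ⬝ᵥ P *ᵥ w = w ⬝ᵥ P *ᵥ v := by
    rw [dotProduct_mulVec, ← mulVec_transpose, hP.eq, dotProduct_comm]
  rw [shallowCutUpdate_mulVec, dotProduct_smul, dotProduct_sub, dotProduct_smul, hsymm,
    smul_eq_mul, smul_eq_mul]
  ring

theorem isSymm_shallowCutUpdate (c β : R) {P : Matrix n n R} (hP : P.IsSymm) (w : n → R) :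
    (shallowCutUpdate c β P w).IsSymm := by
  refine (hP.sub (IsSymm.smul ?_ β)).smul c
  rw [IsSymm, transpose_mul, transpose_mul, transpose_vecMulVec, hP.eq, Matrix.mul_assoc]

theorem det_shallowCutUpdate [DecidableEq n] (c β : R) (P : Matrix n n R) (w : n → R) :
    (shallowCutUpdate c β P w).det
      = c ^ Fintype.card n * P.det * (1 - β * (w ⬝ᵥ P *ᵥ w)) := by
  have hfac : P - β • (P * vecMulVec w w * P)
      = P * (1 + replicateCol Unit (-β • w) * replicateRow Unit (w ᵥ* P)) := by
    rw [← vecMulVec_eq, Matrix.mul_add, Matrix.mul_one, smul_vecMulVec, Matrix.mul_smul,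
      mul_vecMulVec, vecMulVec_mul, mul_vecMulVec, neg_smul, sub_eq_add_neg]
  rw [shallowCutUpdate, hfac, det_smul, det_mul, det_one_add_replicateCol_mul_replicateRow,
    dotProduct_smul, ← dotProduct_mulVec, smul_eq_mul]
  ring

variable [Fintype m] [DecidableEq m]

theorem shallowCutUpdate_mul_of_isometry (c β : R) {P : Matrix n n R} {E : Matrix n m R}
    {D : Matrix m m R} (hE : Eᵀ * E = 1) (hPE : P * E = E * D) (w : m → R) :
    shallowCutUpdate c β P (E *ᵥ w) * E = E * shallowCutUpdate c β D w := by
  have hvmv : vecMulVec (E *ᵥ w) (E *ᵥ w) = E * vecMulVec w w * Eᵀ := by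
    rw [mul_vecMulVec, vecMulVec_mul, vecMul_transpose]
  have hEPE : Eᵀ * (P * E) = D := by rw [hPE, ← Matrix.mul_assoc, hE, Matrix.one_mul]
  simp only [shallowCutUpdate, Matrix.smul_mul, Matrix.mul_smul, Matrix.sub_mul, Matrix.mul_sub,
    hvmv]
  congr 3
  calc P * (E * vecMulVec w w * Eᵀ) * P * E = (P * E) * vecMulVec w w * (Eᵀ * (P * E)) := by
        simp only [Matrix.mul_assoc]
    _ = E * (D * vecMulVec w w * D) := by rw [hEPE, hPE]; simp only [Matrix.mul_assoc]

theorem dotProduct_mulVec_mulVec_of_isometry {E : Matrix n m R} (hE : Eᵀ * E = 1) (v w : m → R) :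
    (E *ᵥ v) ⬝ᵥ (E *ᵥ w) = v ⬝ᵥ w := by
  rw [dotProduct_mulVec, ← mulVec_transpose, mulVec_mulVec, hE, one_mulVec]

theorem mulVec_eq_smul_of_isometry {A : Matrix n n R} {E : Matrix n m R} {M : Matrix m m R}
    (hE : Eᵀ * E = 1) (hAE : A * E = E * M) {μ : R} {v : m → R}
    (hv : A *ᵥ (E *ᵥ v) = μ • (E *ᵥ v)) : M *ᵥ v = μ • v := by
  have hEv : ∀ x : m → R, Eᵀ *ᵥ (E *ᵥ x) = x := fun x => by
    rw [mulVec_mulVec, hE, one_mulVec]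
  rw [← hEv (M *ᵥ v), mulVec_mulVec v E M, ← hAE, ← mulVec_mulVec, hv, mulVec_smul, hEv]

end Update

section Orthonormal

variable {ι n m R : Type*} [Fintype n] [CommRing R] {u : ι → n → R}

theorem mulVec_eq_smul_of_eq_sum_vecMulVec [Fintype ι] [DecidableEq ι]
    (horth : ∀ i j, u i ⬝ᵥ u j = if i = j then (1 : R) else 0) {σ : ι → R}
    {P : Matrix n n R} (hP : P = ∑ i, σ i • vecMulVec (u i) (u i)) (j : ι) :
    P *ᵥ u j = σ j • u j := by
  simp [hP, sum_mulVec, smul_mulVec, vecMulVec_mulVec, horth]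

theorem mul_transpose_self_of_orthonormal [DecidableEq ι] [DecidableEq m]
    (horth : ∀ i j, u i ⬝ᵥ u j = if i = j then (1 : R) else 0) {f : m → ι}
    (hf : Function.Injective f) : (of fun j => u (f j)) * (of fun j => u (f j))ᵀ = 1 := by
  ext j k
  have hjk := horth (f j) (f k)
  simp only [hf.eq_iff] at hjk
  simpa [mul_apply, one_apply, dotProduct] using hjk

theorem mul_transpose_of_eq_mul_diagonal [Fintype m] [DecidableEq m] {P : Matrix n n R}
    {σ : ι → R} (hPu : ∀ i, P *ᵥ u i = σ i • u i) (f : m → ι) :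
    P * (of fun j => u (f j))ᵀ = (of fun j => u (f j))ᵀ * diagonal fun j => σ (f j) := by
  ext k j
  have hkj := congrFun (hPu (f j)) k
  rw [mul_diagonal]
  simpa [mul_apply, mul_comm, mulVec, dotProduct] using hkj

end Orthonormal

theorem dotProduct_mulVec_inv_sqrt_smul {n : Type*} [Fintype n] {A : Matrix n n ℝ} {v : n → ℝ}
    (hv : 0 < v ⬝ᵥ A *ᵥ v) :
    ((√(v ⬝ᵥ A *ᵥ v))⁻¹ • v) ⬝ᵥ A *ᵥ ((√(v ⬝ᵥ A *ᵥ v))⁻¹ • v) = 1 := by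
  rw [mulVec_smul, dotProduct_smul, smul_dotProduct, smul_eq_mul, smul_eq_mul, ← mul_assoc,
    ← sq, inv_pow, Real.sq_sqrt hv.le, inv_mul_cancel₀ hv.ne']

section Diagonal

variable {n : Type*} [Fintype n] [DecidableEq n] {s : n → ℝ}

theorem dotProduct_diagonal_mulVec_sq_le (hs : ∀ i, 0 ≤ s i) (v w : n → ℝ) :
    (w ⬝ᵥ diagonal s *ᵥ v) ^ 2 ≤ (w ⬝ᵥ diagonal s *ᵥ w) * (v ⬝ᵥ diagonal s *ᵥ v) := by
  simp only [mulVec_diagonal, dotProduct]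
  refine Finset.sum_sq_le_sum_mul_sum_of_sq_le_mul _ (fun i _ => ?_) (fun i _ => ?_)
    (fun i _ => le_of_eq (by ring))
  · nlinarith [mul_nonneg (hs i) (sq_nonneg (w i))]
  · nlinarith [mul_nonneg (hs i) (sq_nonneg (v i))]

theorem shallowCutUpdate_diagonal_quadForm_mem_Icc (hs : ∀ i, 0 ≤ s i) {w : n → ℝ}
    (hw : w ⬝ᵥ diagonal s *ᵥ w = 1) {c β : ℝ} (hc : 0 ≤ c) (hβ : 0 ≤ β) (v : n → ℝ) :
    v ⬝ᵥ shallowCutUpdate c β (diagonal s) w *ᵥ v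
      ∈ Set.Icc (c * (1 - β) * (v ⬝ᵥ diagonal s *ᵥ v)) (c * (v ⬝ᵥ diagonal s *ᵥ v)) := by
  have hcs := dotProduct_diagonal_mulVec_sq_le hs v w
  rw [hw, one_mul] at hcs
  rw [dotProduct_shallowCutUpdate_mulVec c β (isSymm_diagonal s), Set.mem_Icc]
  constructor
  · nlinarith [mul_le_mul_of_nonneg_left hcs (mul_nonneg hc hβ)]
  · nlinarith [mul_nonneg (mul_nonneg hc hβ) (sq_nonneg (w ⬝ᵥ diagonal s *ᵥ v))]

end Diagonal

namespace Matrix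

theorem dotProduct_self_pos {n : Type*} [Fintype n] {v : n → ℝ} (hv : v ≠ 0) : 0 < v ⬝ᵥ v := by
  simpa using dotProduct_self_star_pos_iff.mpr hv

section FinTwo

variable {A : Matrix (Fin 2) (Fin 2) ℝ}

theorem eigenvalue_mul_eq_det_and_add_eq_trace {μ₁ μ₂ : ℝ} {v₁ v₂ : Fin 2 → ℝ}
    (hv₁ : v₁ ≠ 0) (hv₂ : v₂ ≠ 0) (horth : v₁ ⬝ᵥ v₂ = 0)
    (he₁ : A *ᵥ v₁ = μ₁ • v₁) (he₂ : A *ᵥ v₂ = μ₂ • v₂) :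
    μ₁ * μ₂ = A.det ∧ μ₁ + μ₂ = A.trace := by
  have e₁ := funext_iff.mp he₁
  have e₂ := funext_iff.mp he₂
  simp only [Fin.forall_fin_two, mulVec, dotProduct, Fin.sum_univ_two, Pi.smul_apply,
    smul_eq_mul] at e₁ e₂ horth
  -- Lagrange's identity: orthogonal nonzero vectors of the plane are linearly independent.
  have hcross : v₁ 0 * v₂ 1 - v₂ 0 * v₁ 1 ≠ 0 := by
    have hlag : (v₁ 0 * v₂ 1 - v₂ 0 * v₁ 1) ^ 2 = (v₁ ⬝ᵥ v₁) * (v₂ ⬝ᵥ v₂) := by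
      simp only [dotProduct, Fin.sum_univ_two]
      linear_combination (-(v₁ 0 * v₂ 0 + v₁ 1 * v₂ 1)) * horth
    intro h
    rw [h, zero_pow two_ne_zero] at hlag
    exact (mul_pos (dotProduct_self_pos hv₁) (dotProduct_self_pos hv₂)).ne hlag
  rw [det_fin_two, trace_fin_two]
  constructor
  · refine mul_right_cancel₀ hcross ?_
    linear_combination (-(μ₂ * v₂ 1)) * e₁.1 + (A 0 0 * v₂ 0 + A 0 1 * v₂ 1) * e₁.2
      + (μ₁ * v₁ 1) * e₂.1 - (A 0 0 * v₁ 0 + A 0 1 * v₁ 1) * e₂.2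
  · refine mul_right_cancel₀ hcross ?_
    linear_combination -(v₂ 1 * e₁.1) + v₂ 0 * e₁.2 + v₁ 1 * e₂.1 - v₁ 0 * e₂.2

theorem eigenvalues_interlace_diag_of_isSymm (hA : A.IsSymm) {μ₁ μ₂ : ℝ} (hdet : μ₁ * μ₂ = A.det)
    (htr : μ₁ + μ₂ = A.trace) (hle : μ₂ ≤ μ₁) : A 0 0 ≤ μ₁ ∧ μ₂ ≤ A 1 1 := by
  rw [det_fin_two, hA.apply 0 1] at hdet
  rw [trace_fin_two] at htr
  -- Both eigenvalues solve `(x - A 0 0) (x - A 1 1) = (A 0 1)² ≥ 0`.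
  have h₁ : (μ₁ - A 0 0) * (μ₁ - A 1 1) = A 0 1 ^ 2 := by linear_combination μ₁ * htr - hdet
  have h₂ : (μ₂ - A 0 0) * (μ₂ - A 1 1) = A 0 1 ^ 2 := by linear_combination μ₂ * htr - hdet
  constructor <;> nlinarith [sq_nonneg (A 0 1)]

theorem eigenvalues_bounds_of_quadForm_bounds (hA : A.IsSymm) {s : Fin 2 → ℝ} {k K : ℝ}
    (hs : s 1 ≤ s 0) (hk : 0 ≤ k) (hK : 0 ≤ K)
    (hlo : ∀ v, k * (v ⬝ᵥ diagonal s *ᵥ v) ≤ v ⬝ᵥ A *ᵥ v)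
    (hhi : ∀ v, v ⬝ᵥ A *ᵥ v ≤ K * (v ⬝ᵥ diagonal s *ᵥ v))
    {μ₁ μ₂ : ℝ} {v₁ v₂ : Fin 2 → ℝ} (hv₁ : v₁ ≠ 0) (hv₂ : v₂ ≠ 0) (horth : v₁ ⬝ᵥ v₂ = 0)
    (he₁ : A *ᵥ v₁ = μ₁ • v₁) (he₂ : A *ᵥ v₂ = μ₂ • v₂) (hle : μ₂ ≤ μ₁) :
    k * s 0 ≤ μ₁ ∧ μ₁ ≤ K * s 0 ∧ k * s 1 ≤ μ₂ ∧ μ₂ ≤ K * s 1 := by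
  obtain ⟨hdet, htr⟩ := eigenvalue_mul_eq_det_and_add_eq_trace hv₁ hv₂ horth he₁ he₂
  obtain ⟨h₀₀, h₁₁⟩ := eigenvalues_interlace_diag_of_isSymm hA hdet htr hle
  have hdiag : ∀ v : Fin 2 → ℝ, v ⬝ᵥ diagonal s *ᵥ v = s 0 * v 0 ^ 2 + s 1 * v 1 ^ 2 := by
    intro v
    simp only [mulVec_diagonal, dotProduct, Fin.sum_univ_two]
    ring
  have hself : ∀ v : Fin 2 → ℝ, v ⬝ᵥ v = v 0 ^ 2 + v 1 ^ 2 := fun v => by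
    simp only [dotProduct, Fin.sum_univ_two]; ring
  have hray : ∀ {μ : ℝ} {v : Fin 2 → ℝ}, A *ᵥ v = μ • v → v ⬝ᵥ A *ᵥ v = μ * (v ⬝ᵥ v) :=
    fun h => by rw [h, dotProduct_smul, smul_eq_mul]
  have hlo₀ : k * s 0 ≤ A 0 0 := by
    simpa [hdiag, dotProduct, mulVec, Fin.sum_univ_two] using hlo ![1, 0]
  have hhi₁ : A 1 1 ≤ K * s 1 := by
    simpa [hdiag, dotProduct, mulVec, Fin.sum_univ_two] using hhi ![0, 1]
  have hup := (hray he₁).symm.trans_le (hhi v₁)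
  have hdown := (hlo v₂).trans_eq (hray he₂)
  have hpos₁ := dotProduct_self_pos hv₁
  have hpos₂ := dotProduct_self_pos hv₂
  rw [hdiag, hself] at hup hdown
  rw [hself] at hpos₁ hpos₂
  refine ⟨by linarith, ?_, ?_, by linarith⟩
  · nlinarith [mul_nonneg hK (mul_nonneg (sub_nonneg.2 hs) (sq_nonneg (v₁ 1)))]
  · nlinarith [mul_nonneg hk (mul_nonneg (sub_nonneg.2 hs) (sq_nonneg (v₂ 0)))]

end FinTwo

end Matrix

theorem shallowCutUpdate_diagonal_eigenvalues {s : Fin 2 → ℝ} (hs₀ : ∀ i, 0 ≤ s i)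
    (hs : s 1 ≤ s 0) {w : Fin 2 → ℝ} (hw : w ⬝ᵥ diagonal s *ᵥ w = 1) {c β : ℝ} (hc : 0 ≤ c)
    (hβ : 0 ≤ β) (hk : 0 ≤ c * (1 - β)) {μ₁ μ₂ : ℝ} {v₁ v₂ : Fin 2 → ℝ} (hv₁ : v₁ ≠ 0)
    (hv₂ : v₂ ≠ 0) (horth : v₁ ⬝ᵥ v₂ = 0)
    (he₁ : shallowCutUpdate c β (diagonal s) w *ᵥ v₁ = μ₁ • v₁)
    (he₂ : shallowCutUpdate c β (diagonal s) w *ᵥ v₂ = μ₂ • v₂) (hle : μ₂ ≤ μ₁) :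
    μ₁ * μ₂ = c ^ 2 * (1 - β) * (s 0 * s 1) ∧
      (c * (1 - β) * s 0 ≤ μ₁ ∧ μ₁ ≤ c * s 0 ∧ c * (1 - β) * s 1 ≤ μ₂ ∧ μ₂ ≤ c * s 1) := by
  have hbounds := shallowCutUpdate_diagonal_quadForm_mem_Icc hs₀ hw hc hβ
  refine ⟨?_, eigenvalues_bounds_of_quadForm_bounds (isSymm_shallowCutUpdate c β
    (isSymm_diagonal s) w) hs hk hc (fun v => (hbounds v).1) (fun v => (hbounds v).2) hv₁ hv₂
    horth he₁ he₂ hle⟩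
  rw [(eigenvalue_mul_eq_det_and_add_eq_trace hv₁ hv₂ horth he₁ he₂).1, det_shallowCutUpdate,
    hw, det_diagonal, Fin.prod_univ_two, Fintype.card_fin]
  ring

theorem shallowCutUpdate_eigenvalues_of_mem_plane {ι n : Type*} [Fintype n] [DecidableEq ι]
    {u : ι → n → ℝ} (horth : ∀ i j, u i ⬝ᵥ u j = if i = j then (1 : ℝ) else 0)
    {P : Matrix n n ℝ} {σ : ι → ℝ} (hPu : ∀ i, P *ᵥ u i = σ i • u i) {i₀ i₁ : ι}
    (hi : i₀ ≠ i₁) (hσ₁ : 0 < σ i₁) (hσ : σ i₁ ≤ σ i₀) {g : n → ℝ} (hg : g ≠ 0)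
    (hgspan : ∃ a b : ℝ, g = a • u i₀ + b • u i₁) {c β : ℝ} (hc : 0 ≤ c) (hβ : 0 ≤ β)
    (hk : 0 ≤ c * (1 - β)) {μ₁ μ₂ : ℝ} {v₁ v₂ : n → ℝ} (hv₁ : v₁ ≠ 0) (hv₂ : v₂ ≠ 0)
    (hv₁span : ∃ p q : ℝ, v₁ = p • u i₀ + q • u i₁)
    (hv₂span : ∃ p q : ℝ, v₂ = p • u i₀ + q • u i₁) (horth' : v₁ ⬝ᵥ v₂ = 0)
    (he₁ : shallowCutUpdate c β P ((√(g ⬝ᵥ P *ᵥ g))⁻¹ • g) *ᵥ v₁ = μ₁ • v₁)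
    (he₂ : shallowCutUpdate c β P ((√(g ⬝ᵥ P *ᵥ g))⁻¹ • g) *ᵥ v₂ = μ₂ • v₂) (hle : μ₂ ≤ μ₁) :
    μ₁ * μ₂ = c ^ 2 * (1 - β) * (σ i₀ * σ i₁) ∧
      (c * (1 - β) * σ i₀ ≤ μ₁ ∧ μ₁ ≤ c * σ i₀ ∧ c * (1 - β) * σ i₁ ≤ μ₂ ∧ μ₂ ≤ c * σ i₁) := by
  set E : Matrix n (Fin 2) ℝ := (of fun j => u (![i₀, i₁] j))ᵀ
  set D : Matrix (Fin 2) (Fin 2) ℝ := diagonal fun j => σ (![i₀, i₁] j)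
  have hE : Eᵀ * E = 1 := by
    rw [transpose_transpose]
    exact mul_transpose_self_of_orthonormal horth
      (Fin.cons_injective_iff.mpr ⟨by simpa using hi, Function.injective_of_subsingleton _⟩)
  have hPE : P * E = E * D := mul_transpose_of_eq_mul_diagonal hPu ![i₀, i₁]
  have hD : ∀ j, 0 < σ (![i₀, i₁] j) := Fin.forall_fin_two.mpr ⟨hσ₁.trans_le hσ, hσ₁⟩
  have hplane : ∀ {v : n → ℝ}, (∃ p q : ℝ, v = p • u i₀ + q • u i₁) → v ≠ 0 →
      ∃ x, x ≠ 0 ∧ v = E *ᵥ x := by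
    rintro v ⟨p, q, rfl⟩ hv
    have hEv : p • u i₀ + q • u i₁ = E *ᵥ ![p, q] := by
      rw [mulVec_transpose, vecMul_eq_sum, Fin.sum_univ_two]; rfl
    exact ⟨![p, q], fun h => hv (by rw [hEv, h, mulVec_zero]), hEv⟩
  obtain ⟨x, hx, rfl⟩ := hplane hgspan hg
  obtain ⟨x₁, hx₁, rfl⟩ := hplane hv₁span hv₁
  obtain ⟨x₂, hx₂, rfl⟩ := hplane hv₂span hv₂
  have hS : (E *ᵥ x) ⬝ᵥ P *ᵥ (E *ᵥ x) = x ⬝ᵥ D *ᵥ x := by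
    rw [mulVec_mulVec, hPE, ← mulVec_mulVec, dotProduct_mulVec_mulVec_of_isometry hE]
  have hSpos : 0 < x ⬝ᵥ D *ᵥ x := by
    simpa only [star_trivial] using (PosDef.diagonal hD).dotProduct_mulVec_pos hx
  have hM : shallowCutUpdate c β P ((√((E *ᵥ x) ⬝ᵥ P *ᵥ (E *ᵥ x)))⁻¹ • (E *ᵥ x)) * E
      = E * shallowCutUpdate c β D ((√(x ⬝ᵥ D *ᵥ x))⁻¹ • x) := by
    rw [hS, ← mulVec_smul]
    exact shallowCutUpdate_mul_of_isometry c β hE hPE _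
  rw [dotProduct_mulVec_mulVec_of_isometry hE] at horth'
  exact shallowCutUpdate_diagonal_eigenvalues (fun j => (hD j).le) hσ
    (dotProduct_mulVec_inv_sqrt_smul hSpos) hc hβ hk hx₁ hx₂ horth'
    (mulVec_eq_smul_of_isometry hE hM he₁) (mulVec_eq_smul_of_isometry hE hM he₂) hle

theorem one_add_mul_pos_of_neg_inv_lt {δ α : ℝ} (hδ : 0 < δ) (hα : -(1 / δ) < α) :
    0 < 1 + δ * α := by
  have := mul_lt_mul_of_pos_left hα hδ
  rw [mul_neg, mul_one_div_cancel hδ.ne'] at this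
  linarith

theorem shallowCut_det_ratio_lt_one {δ α : ℝ} (hδ : 2 ≤ δ) (hα₁ : 0 < 1 + δ * α) (hα₂ : α ≤ 0) :
    δ ^ 4 * (1 - α) ^ 3 * (1 + α) / ((δ + 1) ^ 3 * (δ - 1)) < 1 := by
  rw [div_lt_one (mul_pos (by positivity) (by linarith))]
  set t := δ * α with ht
  -- `δ⁴ (1 - α)³ (1 + α) = (δ - t)³ (δ + t)`, which equals `(δ + 1)³ (δ - 1)` at `t = -1`.
  have hfac : (δ + 1) ^ 3 * (δ - 1) - δ ^ 4 * (1 - α) ^ 3 * (1 + α)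
      = (1 + t) * (2 * δ ^ 3 - 2 * δ * (1 - t + t ^ 2) + (t - 1) * (t ^ 2 + 1)) := by
    rw [ht]; ring
  have ht₀ : t ≤ 0 := mul_nonpos_of_nonneg_of_nonpos (by linarith) hα₂
  have hquad : t ^ 2 - t < 2 := by nlinarith
  have hcube : -4 < (t - 1) * (t ^ 2 + 1) := by
    nlinarith [sq_nonneg t, mul_nonneg (sq_nonneg t) (neg_nonneg.2 ht₀)]
  have hδ₃ : 4 * δ ≤ δ ^ 3 := by
    nlinarith [mul_nonneg (mul_nonneg (show (0:ℝ) ≤ δ by linarith) (sub_nonneg.2 hδ))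
      (show (0:ℝ) ≤ δ + 2 by linarith)]
  have hQ : 0 < 2 * δ ^ 3 - 2 * δ * (1 - t + t ^ 2) + (t - 1) * (t ^ 2 + 1) := by
    nlinarith [mul_lt_mul_of_pos_left hquad (show (0:ℝ) < δ by linarith)]
  nlinarith [mul_pos hα₁ hQ]

theorem shallowCut_scale_mul_one_sub_weight {δ α : ℝ} (hδ : 1 < δ) (hα : 1 + α ≠ 0) :
    δ ^ 2 * (1 - α ^ 2) / (δ ^ 2 - 1) * (1 - 2 * (1 + δ * α) / ((δ + 1) * (1 + α)))
      = δ ^ 2 * (1 - α) ^ 2 / (δ + 1) ^ 2 := by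
  have h₁ : δ - 1 ≠ 0 := by linarith
  have h₂ : δ + 1 ≠ 0 := by linarith
  rw [show δ ^ 2 - 1 = (δ - 1) * (δ + 1) by ring]
  field_simp
  ring

theorem shallowCut_scale_sq_mul_one_sub_weight {δ α : ℝ} (hδ : 1 < δ) (hα : 1 + α ≠ 0) :
    (δ ^ 2 * (1 - α ^ 2) / (δ ^ 2 - 1)) ^ 2 * (1 - 2 * (1 + δ * α) / ((δ + 1) * (1 + α)))
      = δ ^ 4 * (1 - α) ^ 3 * (1 + α) / ((δ + 1) ^ 3 * (δ - 1)) := by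
  have h₁ : δ - 1 ≠ 0 := by linarith
  have h₂ : δ + 1 ≠ 0 := by linarith
  rw [show δ ^ 2 - 1 = (δ - 1) * (δ + 1) by ring]
  field_simp
  ring

/-- Eigenstructure of the shallow-cut ellipsoid update with depth
`α ∈ (-1/d, 0]`: (i) each `u i` (`i ≥ 2`, 0-based) is an eigenvector of `P'`
with eigenvalue `(d²(1-α²)/(d²-1)) σ i`; (ii)–(iii) the two remaining
eigenvalues `σ'₁ ≥ σ'₂` (with eigenvectors in `span{u 0, u 1}`) satisfy the
product identity and the stated bounds. -/
theorem stmt11 (d : ℕ) (hd : 2 ≤ d)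
    (P : Matrix (Fin d) (Fin d) ℝ)
    (σ : Fin d → ℝ) (u : Fin d → Fin d → ℝ)
    (horth : ∀ i j, u i ⬝ᵥ u j = if i = j then (1 : ℝ) else 0)
    (hdecr : ∀ i j : Fin d, i ≤ j → σ j ≤ σ i)
    (hpos : ∀ i, 0 < σ i)
    (hP : P = ∑ i, σ i • vecMulVec (u i) (u i))
    (g : Fin d → ℝ) (hg : g ≠ 0)
    (hspan : ∃ a b : ℝ, g = a • u ⟨0, by omega⟩ + b • u ⟨1, by omega⟩)
    (α : ℝ) (hα₁ : -(1 / (d : ℝ)) < α) (hα₂ : α ≤ 0)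
    (gt : Fin d → ℝ) (hgt : gt = (Real.sqrt (g ⬝ᵥ (P *ᵥ g)))⁻¹ • g)
    (P' : Matrix (Fin d) (Fin d) ℝ)
    (hP' : P' = ((d : ℝ)^2 * (1 - α^2) / ((d : ℝ)^2 - 1)) •
      (P - (2 * (1 + (d : ℝ) * α) / (((d : ℝ) + 1) * (1 + α))) •
        (P * vecMulVec gt gt * P))) :
    (∀ i : Fin d, 2 ≤ (i : ℕ) →
      P' *ᵥ u i = (((d : ℝ)^2 * (1 - α^2) / ((d : ℝ)^2 - 1)) * σ i) • u i) ∧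
    (∀ (σ'₁ σ'₂ : ℝ) (v₁ v₂ : Fin d → ℝ),
      v₁ ≠ 0 → v₂ ≠ 0 →
      (∃ a b : ℝ, v₁ = a • u ⟨0, by omega⟩ + b • u ⟨1, by omega⟩) →
      (∃ a b : ℝ, v₂ = a • u ⟨0, by omega⟩ + b • u ⟨1, by omega⟩) →
      v₁ ⬝ᵥ v₂ = 0 →
      P' *ᵥ v₁ = σ'₁ • v₁ → P' *ᵥ v₂ = σ'₂ • v₂ → σ'₂ ≤ σ'₁ →
      (σ'₁ * σ'₂ / (σ ⟨0, by omega⟩ * σ ⟨1, by omega⟩)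
          = (d : ℝ)^4 * (1 - α)^3 * (1 + α) / (((d : ℝ) + 1)^3 * ((d : ℝ) - 1)) ∧
       (d : ℝ)^4 * (1 - α)^3 * (1 + α) / (((d : ℝ) + 1)^3 * ((d : ℝ) - 1)) < 1 ∧
       ((d : ℝ)^2 * (1 - α)^2 / ((d : ℝ) + 1)^2) * σ ⟨0, by omega⟩ ≤ σ'₁ ∧
       σ'₁ ≤ ((d : ℝ)^2 * (1 - α^2) / ((d : ℝ)^2 - 1)) * σ ⟨0, by omega⟩ ∧
       ((d : ℝ)^2 * (1 - α)^2 / ((d : ℝ) + 1)^2) * σ ⟨1, by omega⟩ ≤ σ'₂ ∧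
       σ'₂ ≤ ((d : ℝ)^2 * (1 - α^2) / ((d : ℝ)^2 - 1)) * σ ⟨1, by omega⟩)) := by
  have hd₂ : (2 : ℝ) ≤ d := by exact_mod_cast hd
  have hdα := one_add_mul_pos_of_neg_inv_lt (by linarith) hα₁
  have hα : 0 < 1 + α := by nlinarith
  set c := (d : ℝ) ^ 2 * (1 - α ^ 2) / ((d : ℝ) ^ 2 - 1)
  set β := 2 * (1 + (d : ℝ) * α) / (((d : ℝ) + 1) * (1 + α))
  have hc : 0 ≤ c := div_nonneg (mul_nonneg (sq_nonneg _) (by nlinarith)) (by nlinarith)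
  have hβ : 0 ≤ β := div_nonneg (by linarith) (by positivity)
  have hk : c * (1 - β) = (d : ℝ) ^ 2 * (1 - α) ^ 2 / ((d : ℝ) + 1) ^ 2 :=
    shallowCut_scale_mul_one_sub_weight (by linarith) hα.ne'
  replace hP' : P' = shallowCutUpdate c β P gt := hP'
  have hPu := mulVec_eq_smul_of_eq_sum_vecMulVec horth hP
  refine ⟨fun i hi => ?_, fun σ'₁ σ'₂ v₁ v₂ hv₁ hv₂ hv₁span hv₂span horth' he₁ he₂ hle => ?_⟩
  · rw [hP']
    refine shallowCutUpdate_mulVec_of_orthogonal (hPu i) ?_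
    obtain ⟨a, b, rfl⟩ := hspan
    have h₀ : 0 ≠ (i : ℕ) := by omega
    have h₁ : 1 ≠ (i : ℕ) := by omega
    simp [hgt, add_dotProduct, horth, Fin.ext_iff, h₀, h₁]
  · rw [hP', hgt] at he₁ he₂
    obtain ⟨hprod, hbounds⟩ := shallowCutUpdate_eigenvalues_of_mem_plane horth hPu
      (by simp) (hpos _) (hdecr _ _ (by simp [Fin.le_def])) hg hspan hc hβ
      (by rw [hk]; positivity) hv₁ hv₂ hv₁span hv₂span horth' he₁ he₂ hle
    rw [hk] at hbounds
    refine ⟨?_, shallowCut_det_ratio_lt_one hd₂ hdα hα₂, hbounds⟩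
    rw [hprod, ← shallowCut_scale_sq_mul_one_sub_weight (by linarith) hα.ne']
    exact mul_div_cancel_right₀ _ (mul_pos (hpos _) (hpos _)).ne'
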